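/- arXiv:1302.7011 — 5 statements merged into one kernel-verified Lean document; each statement's English description precedes it below -/
import Mathlib

section
/- Let b_1, ..., b_k and c be integers, and let P_i, Q_i be the forward convergent numerators and denominators of [b_1, ..., b_k]^-. Then (whenever all intermediate denominators are nonzero) the palindromic continued fraction satisfies [b_1, ..., b_k, c, -b_k, ..., -b_1]^- = c P_k^2 / (c P_k Q_k + 1). -/
/-- Negative continued fraction: `[a]⁻ = a`, `[a₁,…,aₖ]⁻ = a₁ - 1/[a₂,…,aₖ]⁻`. -/
def negCF : List ℚ → ℚ
  | [] => 0
  | [x] => x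
  | x :: y :: l => x - (negCF (y :: l))⁻¹

/-- Forward convergent numerators, shifted so that `Pseq b (i+1) = P_i`:
`P_{-1}=0`, `P_0=1`, `P_i = b_i P_{i-1} - P_{i-2}`. -/
def Pseq (b : ℕ → ℤ) : ℕ → ℤ
  | 0 => 0
  | 1 => 1
  | (n+2) => b (n+1) * Pseq b (n+1) - Pseq b n

/-- Forward convergent denominators, shifted so that `Qseq b (i+1) = Q_i`:
`Q_{-1}=-1`, `Q_0=0`, `Q_i = b_i Q_{i-1} - Q_{i-2}`. -/
def Qseq (b : ℕ → ℤ) : ℕ → ℤ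
  | 0 => -1
  | 1 => 0
  | (n+2) => b (n+1) * Qseq b (n+1) - Qseq b n

/-- The palindromic list `[b₁, …, b_k, c, -b_k, …, -b₁]` as rationals. -/
def palList (b : ℕ → ℤ) (k : ℕ) (c : ℤ) : List ℚ :=
  (List.range k).map (fun t => (b (t+1) : ℚ)) ++ [(c : ℚ)] ++
    (List.range k).map (fun t => (-(b (k - t)) : ℚ))

/-! Put `y = [c, -b_k, …, -b₁]⁻`. The convergents of `[b₁, …, b_k]⁻` express the whole
continued fraction as the Möbius transform `(P_k y - P_{k-1}) / (Q_k y - Q_{k-1})`, and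
reversing a continued fraction gives `[b_k, …, b₁]⁻ = P_k / P_{k-1}`, so
`y = c + P_{k-1} / P_k`. Substituting, the determinant identity
`P_{k-1} Q_k - P_k Q_{k-1} = 1` collapses the denominator to `(c P_k Q_k + 1) / P_k`. -/

def cfHead (b : ℕ → ℤ) (m : ℕ) : List ℚ :=
  (List.range m).map fun t => (b (t+1) : ℚ)

/-- `[-b_j, …, -b₁]`. -/
def cfNegRev (b : ℕ → ℤ) (j : ℕ) : List ℚ :=
  (List.range j).map fun t => (-(b (j - t)) : ℚ)

lemma cfHead_succ (b : ℕ → ℤ) (m : ℕ) :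
    cfHead b (m+1) = cfHead b m ++ [(b (m+1) : ℚ)] := by
  simp [cfHead, List.range_succ]

lemma cfNegRev_succ (b : ℕ → ℤ) (j : ℕ) :
    cfNegRev b (j+1) = (-(b (j+1)) : ℚ) :: cfNegRev b j := by
  simp [cfNegRev, List.range_succ_eq_map, Function.comp_def]

lemma palList_eq (b : ℕ → ℤ) (k : ℕ) (c : ℤ) :
    palList b k c = cfHead b k ++ (c : ℚ) :: cfNegRev b k := by
  simp [palList, cfHead, cfNegRev]

lemma length_palList (b : ℕ → ℤ) (k : ℕ) (c : ℤ) : (palList b k c).length = 2 * k + 1 := by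
  simp [palList]
  omega

lemma palList_drop_add (b : ℕ → ℤ) (k : ℕ) (c : ℤ) (i : ℕ) :
    (palList b k c).drop (k + (i + 1)) = (cfNegRev b k).drop i := by
  have hhead : (cfHead b k).length = k := by simp [cfHead]
  rw [palList_eq, List.drop_append, List.drop_eq_nil_of_le (by omega), hhead,
    List.nil_append, Nat.add_sub_cancel_left, List.drop_succ_cons]

/-- Also valid for `l = []`, since `negCF [] = 0` and `0⁻¹ = 0`. -/
lemma negCF_cons (x : ℚ) (l : List ℚ) : negCF (x :: l) = x - (negCF l)⁻¹ := by
  cases l with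
  | nil => simp [negCF]
  | cons y t => rfl

lemma Pseq_mul_Qseq_succ_sub (b : ℕ → ℤ) (k : ℕ) :
    Pseq b k * Qseq b (k+1) - Pseq b (k+1) * Qseq b k = 1 := by
  induction k with
  | zero => simp [Pseq, Qseq]
  | succ k ih =>
    simp only [Pseq, Qseq]
    linear_combination ih

lemma mobius_sub_inv {K : Type*} [Field K] (a p₀ p₁ q₀ q₁ y : K) (hy : y ≠ 0) :
    (p₁ * (a - y⁻¹) - p₀) / (q₁ * (a - y⁻¹) - q₀) =
      ((a * p₁ - p₀) * y - p₁) / ((a * q₁ - q₀) * y - q₁) := by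
  have key (r₀ r₁ : K) : r₁ * (a - y⁻¹) - r₀ = ((a * r₁ - r₀) * y - r₁) / y := by
    field_simp
    ring
  rw [key p₀, key q₀, div_div_div_cancel_right₀ hy]

lemma negCF_cfHead_append (b : ℕ → ℤ) (m : ℕ) (rest : List ℚ)
    (h : ∀ j, 1 ≤ j → j ≤ m → negCF ((cfHead b m ++ rest).drop j) ≠ 0) :
    negCF (cfHead b m ++ rest) =
      ((Pseq b (m+1) : ℚ) * negCF rest - Pseq b m) /
        ((Qseq b (m+1) : ℚ) * negCF rest - Qseq b m) := by
  induction m generalizing rest with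
  | zero => simp [cfHead, Pseq, Qseq]
  | succ m ih =>
    have hassoc : cfHead b (m+1) ++ rest = cfHead b m ++ (b (m+1) : ℚ) :: rest := by
      simp [cfHead_succ]
    have hrest : negCF rest ≠ 0 := by
      simpa [List.drop_left', cfHead] using h (m+1) (by omega) le_rfl
    rw [hassoc, ih _ (fun j hj hjm => hassoc ▸ h j hj (by omega)), negCF_cons,
      mobius_sub_inv _ _ _ _ _ _ hrest]
    simp only [Pseq, Qseq]
    push_cast
    ring

lemma negCF_cfNegRev (b : ℕ → ℤ) (j : ℕ)
    (h : ∀ i, i < j → negCF ((cfNegRev b j).drop i) ≠ 0) :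
    negCF (cfNegRev b j) = -((Pseq b (j+1) : ℚ) / Pseq b j) ∧ (Pseq b (j+1) : ℚ) ≠ 0 := by
  induction j with
  | zero => simp [cfNegRev, negCF, Pseq]
  | succ j ih =>
    obtain ⟨hval, hP⟩ := ih fun i hi => by simpa [cfNegRev_succ] using h (i+1) (by omega)
    have hval' : negCF (cfNegRev b (j+1)) = -((Pseq b (j+2) : ℚ) / Pseq b (j+1)) := by
      rw [cfNegRev_succ, negCF_cons, hval, inv_neg, inv_div]
      simp only [Pseq]
      push_cast
      field_simp
      ring
    refine ⟨hval', fun h0 => h 0 (by omega) ?_⟩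
    simp [hval', h0]

lemma mobius_add_div_of_det {K : Type*} [Field K] (c p₀ p₁ q₀ q₁ : K)
    (hdet : p₀ * q₁ - p₁ * q₀ = 1) (hp₁ : p₁ ≠ 0) :
    (p₁ * (c + p₀ / p₁) - p₀) / (q₁ * (c + p₀ / p₁) - q₀) = c * p₁ ^ 2 / (c * p₁ * q₁ + 1) := by
  have hnum : p₁ * (c + p₀ / p₁) - p₀ = c * p₁ ^ 2 / p₁ := by
    field_simp
    ring
  have hden : q₁ * (c + p₀ / p₁) - q₀ = (c * p₁ * q₁ + 1) / p₁ := by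
    field_simp
    linear_combination hdet
  rw [hnum, hden, div_div_div_cancel_right₀ hp₁]

theorem stmt_3 (b : ℕ → ℤ) (c : ℤ) (k : ℕ)
    (hden : ∀ j, 1 ≤ j → j < (palList b k c).length →
      negCF ((palList b k c).drop j) ≠ 0) :
    negCF (palList b k c) =
      ((c : ℚ) * (Pseq b (k+1) : ℚ)^2) /
        ((c : ℚ) * (Pseq b (k+1) : ℚ) * (Qseq b (k+1) : ℚ) + 1) := by
  have hlen := length_palList b k c
  obtain ⟨hrev, hP⟩ := negCF_cfNegRev b k fun i hi =>
    palList_drop_add b k c i ▸ hden (k + (i + 1)) (by omega) (by omega)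
  have hfront := negCF_cfHead_append b k ((c : ℚ) :: cfNegRev b k) fun j hj hjk =>
    palList_eq b k c ▸ hden j hj (by omega)
  rw [palList_eq, hfront, negCF_cons, hrev, inv_neg, inv_div, sub_neg_eq_add]
  exact mobius_add_div_of_det _ _ _ _ _ (by exact_mod_cast Pseq_mul_Qseq_succ_sub b k) hP
end

section
/- Let s, t be integers, set m = 4 + 3t + 2s + 2st and d = -(3 + 2s). Then the continued fraction [-t-1, s+2, 2, t+2, 2, -s-1]^- equals m^2 / (-(3+2s)^2 (1+t)) whenever defined, d is odd, d divides m - 1 with m - 1 = -d(1+t), and setting q = d(m-1) one has q ≡ -(3+2s)^2(1+t) (mod m^2). -/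
/-- Numerator and denominator of `[a₁,…,aₖ]⁻`, read off the matrix product
`∏ᵢ !![aᵢ, -1; 1, 0]` applied to `(1, 0)`. -/
def negCFNumDen : List ℚ → ℚ × ℚ
  | [] => (1, 0)
  | x :: l => (x * (negCFNumDen l).1 - (negCFNumDen l).2, (negCFNumDen l).1)

theorem negCF_eq_num_div_den {l : List ℚ} (hl : l ≠ [])
    (h : ∀ j, 1 ≤ j → j < l.length → negCF (l.drop j) ≠ 0) :
    (negCFNumDen l).2 ≠ 0 ∧ negCF l = (negCFNumDen l).1 / (negCFNumDen l).2 := by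
  induction l with
  | nil => exact absurd rfl hl
  | cons x l ih =>
    rcases l with _ | ⟨y, l⟩
    · simp [negCFNumDen, negCF]
    have htail : ∀ j, 1 ≤ j → j < (y :: l).length → negCF ((y :: l).drop j) ≠ 0 :=
      fun j hj hjl => h (j + 1) (by omega) (by simpa using hjl)
    obtain ⟨-, hval⟩ := ih (List.cons_ne_nil y l) htail
    have hne : negCF (y :: l) ≠ 0 := h 1 le_rfl (by simp)
    have hnum : (negCFNumDen (y :: l)).1 ≠ 0 := by
      rw [hval, div_ne_zero_iff] at hne
      exact hne.1
    refine ⟨hnum, ?_⟩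
    rw [negCF, hval, inv_div, sub_div' hnum]
    rfl

/-- With `m = 4 + 3t + 2s + 2st` and `d = -(3+2s)`:
`[-t-1, s+2, 2, t+2, 2, -s-1]⁻ = m² / (-(3+2s)²(1+t))` whenever defined,
`d` is odd, `d ∣ m-1` with `m - 1 = -d(1+t)`, and `q = d(m-1)` satisfies
`q ≡ -(3+2s)²(1+t) (mod m²)`. -/
theorem stmt_8 (s t : ℤ)
    (hden : ∀ j, 1 ≤ j → j < 6 →
      negCF (([(-(t:ℚ) - 1), (s:ℚ) + 2, 2, (t:ℚ) + 2, 2, -(s:ℚ) - 1]).drop j) ≠ 0) :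
    negCF [(-(t:ℚ) - 1), (s:ℚ) + 2, 2, (t:ℚ) + 2, 2, -(s:ℚ) - 1] =
      ((4 + 3*t + 2*s + 2*s*t : ℤ)^2 : ℚ) / ((-(3 + 2*s)^2 * (1 + t) : ℤ) : ℚ) ∧
    Odd (-(3 + 2*s)) ∧
    (-(3 + 2*s)) ∣ ((4 + 3*t + 2*s + 2*s*t) - 1) ∧
    (4 + 3*t + 2*s + 2*s*t) - 1 = -(-(3 + 2*s)) * (1 + t) ∧
    (-(3 + 2*s)) * ((4 + 3*t + 2*s + 2*s*t) - 1) ≡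
      -(3 + 2*s)^2 * (1 + t) [ZMOD (4 + 3*t + 2*s + 2*s*t)^2] := by
  refine ⟨?_, ⟨-s - 2, by ring⟩, ⟨-(1 + t), by ring⟩, by ring, ?_⟩
  · rw [(negCF_eq_num_div_den (List.cons_ne_nil _ _) ?_).2]
    · simp only [negCFNumDen]
      push_cast
      congr 1 <;> ring
    · exact hden
  · exact congrArg (· % _) (by ring)
end

section
/- Let s, t be integers, set m = 4 + 3s + 3t + 2st and d = -(3 + 2s), p = m^2, q = d(m-1). Then d divides 2m + 1 with 2m + 1 = -d(3 + 2t), q·m ≡ -d·m (mod p), and -(3+2t)·m·d ≡ m (mod p) (so that -(3+2t)m represents d^{-1}m modulo p). -/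
/-! Everything follows from the factorisation `2m + 1 = (3 + 2s)(3 + 2t)` and the fact that
multiplying a congruence modulo `m` by `m` gives a congruence modulo `m²`. -/

theorem two_mul_add_one_eq_mul (s t : ℤ) :
    2 * (4 + 3*s + 3*t + 2*s*t) + 1 = (3 + 2*s) * (3 + 2*t) := by
  ring

theorem Int.ModEq.mul_self_right {a b m : ℤ} (h : a ≡ b [ZMOD m]) :
    a * m ≡ b * m [ZMOD m ^ 2] := by
  simpa only [sq] using h.mul_right'

/-- With `m = 4 + 3s + 3t + 2st`, `d = -(3+2s)`, `p = m²`, `q = d(m-1)`: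
`d ∣ 2m+1` with `2m+1 = -d(3+2t)`, `q·m ≡ -d·m (mod p)`, and
`-(3+2t)·m·d ≡ m (mod p)`. -/
theorem stmt_10 (s t : ℤ) :
    (-(3 + 2*s)) ∣ (2*(4 + 3*s + 3*t + 2*s*t) + 1) ∧
    2*(4 + 3*s + 3*t + 2*s*t) + 1 = -(-(3 + 2*s)) * (3 + 2*t) ∧
    (-(3 + 2*s) * ((4 + 3*s + 3*t + 2*s*t) - 1)) * (4 + 3*s + 3*t + 2*s*t) ≡
      -(-(3 + 2*s)) * (4 + 3*s + 3*t + 2*s*t) [ZMOD (4 + 3*s + 3*t + 2*s*t)^2] ∧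
    -(3 + 2*t) * (4 + 3*s + 3*t + 2*s*t) * (-(3 + 2*s)) ≡
      (4 + 3*s + 3*t + 2*s*t) [ZMOD (4 + 3*s + 3*t + 2*s*t)^2] := by
  have hfac := two_mul_add_one_eq_mul s t
  set m := 4 + 3*s + 3*t + 2*s*t
  set d := -(3 + 2*s)
  refine ⟨⟨-(3 + 2*t), by rw [hfac]; ring⟩, by rw [hfac]; ring, ?_, ?_⟩
  · have hq : d * (m - 1) ≡ -d [ZMOD m] := Int.modEq_iff_dvd.mpr ⟨-d, by ring⟩
    exact hq.mul_self_right
  · have hunit : 2 * m + 1 ≡ 1 [ZMOD m] := Int.modEq_iff_dvd.mpr ⟨-2, by ring⟩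
    calc -(3 + 2*t) * m * d = (2 * m + 1) * m := by rw [hfac]; ring
      _ ≡ 1 * m [ZMOD m ^ 2] := hunit.mul_self_right
      _ = m := one_mul m
end

section
/- Let n be an integer with n ∉ {-1, 0}, p = (4n-1)^2 and q = 8n^2 - 1. Then q^2 is not congruent to 1 and not congruent to -1 modulo p. -/
/-!
Write `q = 8n² - 1`. Then `q² - 1 = 4 (2n)² (2n - 1) (2n + 1)`, and `4n - 1` is coprime to `2n`,
`2n - 1` and `4`; so `q² ≡ 1 [ZMOD (4n-1)²]` forces `(4n-1)² ∣ 2n + 1`, which is too small unless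
`n = 0`. Modulo `4n - 1` we have `8n² ≡ 1/2`, hence `q² + 1 ≡ 5/4`, and `q² ≡ -1` forces
`4n - 1 ∣ 5`, i.e. `n ∈ {0, -1}`.
-/

lemma isCoprime_four_mul_sub_one_sq (n : ℤ) :
    IsCoprime ((4*n - 1)^2) (4 * (2*n)^2 * (2*n - 1)) := by
  have h4 : IsCoprime (4*n - 1) 4 := ⟨-1, n, by ring⟩
  have h2n : IsCoprime (4*n - 1) (2*n) := ⟨-1, 2, by ring⟩
  have h2n1 : IsCoprime (4*n - 1) (2*n - 1) := ⟨1, -2, by ring⟩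
  exact ((h4.mul_right h2n.pow_right).mul_right h2n1).pow_left

lemma eq_zero_of_sq_dvd_two_mul_add_one {n : ℤ} (h : (4*n - 1)^2 ∣ 2*n + 1) : n = 0 := by
  by_contra hn
  have hle : (4*n - 1)^2 ≤ |2*n + 1| :=
    Int.le_of_dvd (abs_pos.mpr (by omega)) ((dvd_abs _ _).mpr h)
  have hn' : 1 ≤ n ∨ n ≤ -1 := by omega
  rcases abs_cases (2*n + 1) with ⟨habs, _⟩ | ⟨habs, _⟩ <;> rw [habs] at hle <;>
    rcases hn' with hn' | hn' <;> nlinarith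

lemma eq_zero_of_sq_modEq_one {n : ℤ} (h : (8*n^2 - 1)^2 ≡ 1 [ZMOD (4*n - 1)^2]) : n = 0 := by
  have hfactor : (8*n^2 - 1)^2 - 1 = 4 * (2*n)^2 * (2*n - 1) * (2*n + 1) := by ring
  have hdvd : (4*n - 1)^2 ∣ 4 * (2*n)^2 * (2*n - 1) * (2*n + 1) := hfactor ▸ h.symm.dvd
  exact eq_zero_of_sq_dvd_two_mul_add_one ((isCoprime_four_mul_sub_one_sq n).dvd_of_dvd_mul_left hdvd)

lemma dvd_five_of_sq_modEq_neg_one {n : ℤ} (h : (8*n^2 - 1)^2 ≡ -1 [ZMOD 4*n - 1]) :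
    4*n - 1 ∣ 5 := by
  -- `16n² ≡ 1`, so `4 (q² + 1) ≡ (16n² - 2)² + 4 ≡ 5`.
  have hdvd : 4*n - 1 ∣ (8*n^2 - 1)^2 + 1 := by
    simpa [sub_neg_eq_add, add_comm] using (Int.ModEq.dvd h.symm)
  have hfive : 5 = 4 * ((8*n^2 - 1)^2 + 1) - (4*n - 1) * (64*n^3 + 16*n^2 - 12*n - 3) := by ring
  rw [hfive]
  exact dvd_sub (hdvd.mul_left 4) (dvd_mul_right _ _)

lemma eq_zero_or_eq_neg_one_of_dvd_five {n : ℤ} (h : 4*n - 1 ∣ 5) : n = 0 ∨ n = -1 := by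
  have hle : 4*n - 1 ≤ 5 := Int.le_of_dvd (by norm_num) h
  have hge : -(4*n - 1) ≤ 5 := Int.le_of_dvd (by norm_num) (neg_dvd.mpr h)
  have hn : n = -1 ∨ n = 0 ∨ n = 1 := by omega
  rcases hn with rfl | rfl | rfl
  · exact Or.inr rfl
  · exact Or.inl rfl
  · norm_num at h

/-- For `n ∉ {-1, 0}`, `p = (4n-1)²`, `q = 8n²-1`: `q² ≢ 1` and `q² ≢ -1 (mod p)`. -/
theorem stmt_12 (n : ℤ) (h1 : n ≠ -1) (h0 : n ≠ 0) :
    ¬ ((8*n^2 - 1)^2 ≡ 1 [ZMOD (4*n - 1)^2]) ∧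
    ¬ ((8*n^2 - 1)^2 ≡ -1 [ZMOD (4*n - 1)^2]) := by
  refine ⟨fun h => h0 (eq_zero_of_sq_modEq_one h), fun h => ?_⟩
  have h' : (8*n^2 - 1)^2 ≡ -1 [ZMOD 4*n - 1] := h.of_dvd (dvd_pow_self _ two_ne_zero)
  exact (eq_zero_or_eq_neg_one_of_dvd_five (dvd_five_of_sq_modEq_neg_one h')).elim h0 h1
end

section
/- Let s, t be nonnegative integers and consider the continued fraction [2,...,2 (t times), 3, 2+s, 2+t, 3, 2,...,2 (s times)]^- = p/q. Then the intersection lattice (Z^{t+s+4}, Q) given by the associated negative-definite plumbing (diagonal entries -a_i, consecutive off-diagonal entries 1) embeds isometrically into the standard negative diagonal lattice Z^{t+s+4}: explicitly, the assignment of vectors v_i to signed sums of standard basis vectors given by Lisca's table for type (2) satisfies v_i·v_i = -a_i, v_i·v_{i+1} = 1, and v_i·v_j = 0 for |i-j| > 1. -/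
/-!
Write `e a` for the `a`-th standard basis vector and `χ[p, q) = e p + ⋯ + e (q - 1)`.
Lisca's vectors are short signed sums of these: for `i < t`, `v i` runs through the chain
`e 0 + e 1, -e 0 + e 2, -e 2 + e 3, …`, whose next term plus `e (t + 2)` is `v t`; then
`v (t+1) = -e c + χ[t+3, t+s+4)`, `v (t+2) = e 0 - e 1 + χ[2, t+2)`,
`v (t+3) = -e c + e (t+2) - e (t+3)`, where `c = t + 1` (`c = 0` if `t = 0`), and the tail is
`v i = e (i-1) - e i`. Pairing two such sums expands bilinearly into pairings of intervals,
`χ[p, q) · χ[p', q') = |[p, q) ∩ [p', q')|`, so each Gram entry becomes a linear-arithmetic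
identity in `t` and `s`.
-/

/-- The coefficient string `(2^{[t]}, 3, 2+s, 2+t, 3, 2^{[s]})`, 0-indexed. -/
def typeTwoCoeff (t s : ℕ) (i : ℕ) : ℤ :=
  if i < t then 2
  else if i = t then 3
  else if i = t + 1 then 2 + (s : ℤ)
  else if i = t + 2 then 2 + (t : ℤ)
  else if i = t + 3 then 3
  else 2

open Finset

def dotRange (n : ℕ) (x y : ℕ → ℤ) : ℤ := ∑ k ∈ range n, x k * y k

section dotRange

variable {n : ℕ} {x y z : ℕ → ℤ}

theorem add_dotRange : dotRange n (x + y) z = dotRange n x z + dotRange n y z := by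
  simp [dotRange, add_mul, sum_add_distrib]

theorem dotRange_add : dotRange n x (y + z) = dotRange n x y + dotRange n x z := by
  simp [dotRange, mul_add, sum_add_distrib]

theorem sub_dotRange : dotRange n (x - y) z = dotRange n x z - dotRange n y z := by
  simp [dotRange, sub_mul, sum_sub_distrib]

theorem dotRange_sub : dotRange n x (y - z) = dotRange n x y - dotRange n x z := by
  simp [dotRange, mul_sub, sum_sub_distrib]

theorem neg_dotRange : dotRange n (-x) y = -dotRange n x y := by
  simp [dotRange]

theorem dotRange_neg : dotRange n x (-y) = -dotRange n x y := by
  simp [dotRange]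

theorem sum_fin_mul_eq_dotRange (x y : ℕ → ℤ) :
    ∑ k : Fin n, x k * y k = dotRange n x y :=
  Fin.sum_univ_eq_sum_range (fun k => x k * y k) n

end dotRange

def block (p q k : ℕ) : ℤ := if p ≤ k ∧ k < q then 1 else 0

abbrev unitVec (a : ℕ) : ℕ → ℤ := block a (a + 1)

theorem dotRange_block_block (n p q p' q' : ℕ) :
    dotRange n (block p q) (block p' q') = ((min n (min q q') - max p p' : ℕ) : ℤ) := by
  have hmul (k : ℕ) :
      block p q k * block p' q' k = if k ∈ Ico (max p p') (min q q') then 1 else 0 := by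
    simp only [block, mem_Ico]
    split_ifs <;> first | rfl | omega
  have hinter : range n ∩ Ico (max p p') (min q q') = Ico (max p p') (min n (min q q')) := by
    ext
    simp only [mem_inter, mem_range, mem_Ico]
    omega
  rw [dotRange, sum_congr rfl fun k _ => hmul k, sum_boole, filter_mem_eq_inter, hinter,
    Nat.card_Ico]

section block

variable {n p q p' q' a : ℕ}

theorem dotRange_unitVec_unitVec (b : ℕ) (ha : a < n) :
    dotRange n (unitVec a) (unitVec b) = if a = b then 1 else 0 := by
  rw [dotRange_block_block]; split_ifs <;> omega

theorem dotRange_unitVec_block (ha : a < n) :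
    dotRange n (unitVec a) (block p q) = if p ≤ a ∧ a < q then 1 else 0 := by
  rw [dotRange_block_block]; split_ifs <;> omega

theorem dotRange_block_unitVec (ha : a < n) :
    dotRange n (block p q) (unitVec a) = if p ≤ a ∧ a < q then 1 else 0 := by
  rw [dotRange_block_block]; split_ifs <;> omega

theorem dotRange_block_self (hq : q ≤ n) : dotRange n (block p q) (block p q) = (q - p : ℕ) := by
  rw [dotRange_block_block, min_self, max_self, min_eq_right hq]

theorem dotRange_block_block_of_le (h : q' ≤ p) : dotRange n (block p q) (block p' q') = 0 := by
  rw [dotRange_block_block]; omega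

end block

def chainVec (i : ℕ) : ℕ → ℤ :=
  if i = 0 then unitVec 0 + unitVec 1 else -unitVec (if i = 1 then 0 else i) + unitVec (i + 1)

def typeTwoVec (t s i : ℕ) : ℕ → ℤ :=
  if i < t then chainVec i
  else if i = t then chainVec t + unitVec (t + 2)
  else if i = t + 1 then -unitVec (if t = 0 then 0 else t + 1) + block (t + 3) (t + s + 4)
  else if i = t + 2 then unitVec 0 - unitVec 1 + block 2 (t + 2)
  else if i = t + 3 then -unitVec (if t = 0 then 0 else t + 1) + unitVec (t + 2) - unitVec (t + 3)
  else unitVec (i - 1) - unitVec i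

theorem typeTwoVec_apply_mem (t s i k : ℕ) :
    typeTwoVec t s i k = -1 ∨ typeTwoVec t s i k = 0 ∨ typeTwoVec t s i k = 1 := by
  simp only [typeTwoVec, chainVec]
  split_ifs <;> simp only [Pi.add_apply, Pi.sub_apply, Pi.neg_apply, block] <;> split_ifs <;> omega

theorem dotRange_typeTwoVec (t s i j : ℕ) (hij : i ≤ j) (hjn : j < t + s + 4) :
    dotRange (t + s + 4) (typeTwoVec t s i) (typeTwoVec t s j) =
      if j = i then typeTwoCoeff t s i else if j = i + 1 then -1 else 0 := by
  rcases (by omega : i < t ∨ i = t ∨ i = t + 1 ∨ i = t + 2 ∨ i = t + 3 ∨ t + 4 ≤ i)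
    with hi | hi | hi | hi | hi | hi <;>
  rcases (by omega : j < t ∨ j = t ∨ j = t + 1 ∨ j = t + 2 ∨ j = t + 3 ∨ t + 4 ≤ j)
    with hj | hj | hj | hj | hj | hj <;>
  -- once both indices are placed in a region, every remaining `if` has a linear condition
  first
  | omega
  | simp (disch := omega) only [typeTwoVec, chainVec, typeTwoCoeff, if_pos, if_neg]
    (try split_ifs) <;>
    simp (disch := omega) only [if_pos, if_neg, add_dotRange, dotRange_add, sub_dotRange,
      dotRange_sub, neg_dotRange, dotRange_neg, dotRange_unitVec_unitVec, dotRange_unitVec_block,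
      dotRange_block_unitVec, dotRange_block_self, dotRange_block_block_of_le] <;>
    (try split_ifs) <;> omega

/-- The intersection lattice of the negative-definite plumbing with string
`(-2^{[t]}, -3, -2-s, -2-t, -3, -2^{[s]})` embeds isometrically into the standard
negative diagonal lattice of rank `t+s+4`: there are vectors `v i` with entries in
`{-1,0,1}` such that `v i · v i = -a_i`, `v i · v j = 1` for `|i-j| = 1`, and
`v i · v j = 0` for `|i-j| > 1`, where `x · y = -∑ x_k y_k`. -/
theorem stmt_15 (t s : ℕ) :
    ∃ v : Fin (t+s+4) → Fin (t+s+4) → ℤ,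
      (∀ i k, v i k = -1 ∨ v i k = 0 ∨ v i k = 1) ∧
      (∀ i : Fin (t+s+4), -(∑ k, v i k * v i k) = -(typeTwoCoeff t s (i : ℕ))) ∧
      (∀ i j : Fin (t+s+4), (i : ℕ) + 1 = (j : ℕ) → -(∑ k, v i k * v j k) = 1) ∧
      (∀ i j : Fin (t+s+4), (i : ℕ) + 1 < (j : ℕ) → -(∑ k, v i k * v j k) = 0) := by
  refine ⟨fun i k => typeTwoVec t s i k, fun i k => typeTwoVec_apply_mem t s i k, fun i => ?_,
    fun i j hij => ?_, fun i j hij => ?_⟩ <;>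
    simp only [sum_fin_mul_eq_dotRange (n := t + s + 4)]
  · rw [dotRange_typeTwoVec t s i i le_rfl i.isLt, if_pos rfl]
  · rw [dotRange_typeTwoVec t s i j (by omega) j.isLt, if_neg (by omega), if_pos hij.symm, neg_neg]
  · rw [dotRange_typeTwoVec t s i j (by omega) j.isLt, if_neg (by omega), if_neg (by omega), neg_zero]
end
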